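/- The measure ν_n defined by ν_n(E) = ∫_E |det ς(x)|⁻¹ dμ_n(x) on Borel subsets of G_n is left-invariant: ν_n(aE) = ν_n(E) for every a ∈ G_n and Borel set E ⊆ G_n. -/

import Mathlib

open Matrix MeasureTheory Filter

noncomputable def gmat (n : ℕ) : Matrix (Fin n) (Fin n) ℝ :=
  Matrix.of fun i j => if (j : ℕ) = (i : ℕ) + 1 then 1
    else if (i : ℕ) = n - 1 ∧ (j : ℕ) = 0 then (-1) else 0

noncomputable def sig (n : ℕ) (u : Fin n → ℝ) : Matrix (Fin n) (Fin n) ℝ :=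
  ∑ ℓ : Fin n, u ℓ • gmat n ^ (ℓ : ℕ)

noncomputable def emul (n : ℕ) [NeZero n] (u v : Fin n → ℝ) : Fin n → ℝ :=
  fun j => (sig n u * sig n v) 0 j

noncomputable def einv (n : ℕ) [NeZero n] (u : Fin n → ℝ) : Fin n → ℝ :=
  fun j => (sig n u)⁻¹ 0 j

noncomputable def pd2 (n : ℕ) (h : (Fin n → ℝ) → ℝ) (i : Fin n) (a : Fin n → ℝ) : ℝ :=
  lineDeriv ℝ (fun x => lineDeriv ℝ h x (Pi.single i 1)) a (Pi.single i 1)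

/-! The first row of `sig n u` is `u`, and `sig n u` commutes with `gmat n`; a matrix commuting
with `gmat n` is determined by its first row, since row `i` is row `0` times `gmat n ^ i`. Hence
`sig n (emul n a y) = sig n a * sig n y`, and `y ↦ emul n a y = y ᵥ* sig n a` is linear with
determinant `det (sig n a)`. The change of variables formula produces the factor `|det (sig n a)|`,
which cancels against `|det (sig n (emul n a y))|⁻¹ = |det (sig n a)|⁻¹ * |det (sig n y)|⁻¹`. -/

section Sig

variable {n : ℕ}

lemma commute_gmat_sig (u : Fin n → ℝ) : Commute (gmat n) (sig n u) :=
  Commute.sum_right _ _ _ fun _ _ => ((Commute.refl _).pow_right _).smul_right _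

lemma commute_sig_sig (u v : Fin n → ℝ) : Commute (sig n u) (sig n v) :=
  Commute.sum_left _ _ _ fun _ _ => (commute_gmat_sig v).pow_left _ |>.smul_left _

variable [NeZero n]

lemma gmat_pow_row_zero {ℓ : ℕ} (hℓ : ℓ < n) : (gmat n ^ ℓ) 0 = Pi.single ⟨ℓ, hℓ⟩ 1 := by
  induction ℓ with
  | zero => ext j; simp [Pi.single_apply, Matrix.one_apply, eq_comm]
  | succ ℓ ih =>
    rw [pow_succ, mul_apply_eq_vecMul, ih (by omega), single_one_vecMul]
    have hℓ' : ℓ ≠ n - 1 := by omega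
    ext j
    simp only [gmat, Matrix.row, Matrix.of_apply, Pi.single_apply, Fin.ext_iff]
    simp [hℓ']

lemma sig_row_zero (u : Fin n → ℝ) : sig n u 0 = u := by
  ext j
  simp [sig, Matrix.sum_apply, gmat_pow_row_zero, Pi.single_apply]

lemma row_eq_row_zero_vecMul_gmat_pow {M : Matrix (Fin n) (Fin n) ℝ} (hM : Commute (gmat n) M)
    (i : Fin n) : M i = M 0 ᵥ* gmat n ^ (i : ℕ) :=
  calc M i = (gmat n ^ (i : ℕ) * M) 0 := by
        rw [mul_apply_eq_vecMul, gmat_pow_row_zero i.isLt, single_one_vecMul]; rfl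
    _ = M 0 ᵥ* gmat n ^ (i : ℕ) := by rw [(hM.pow_left _).eq, mul_apply_eq_vecMul]

lemma eq_of_commute_gmat_of_row_zero_eq {M N : Matrix (Fin n) (Fin n) ℝ}
    (hM : Commute (gmat n) M) (hN : Commute (gmat n) N) (h : M 0 = N 0) : M = N := by
  funext i
  rw [row_eq_row_zero_vecMul_gmat_pow hM, row_eq_row_zero_vecMul_gmat_pow hN, h]

lemma sig_emul (a y : Fin n → ℝ) : sig n (emul n a y) = sig n a * sig n y :=
  eq_of_commute_gmat_of_row_zero_eq (commute_gmat_sig _)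
    ((commute_gmat_sig a).mul_right (commute_gmat_sig y)) (sig_row_zero _)

lemma emul_eq_vecMul (a y : Fin n → ℝ) : emul n a y = y ᵥ* sig n a := by
  change (sig n a * sig n y) 0 = _
  rw [(commute_sig_sig a y).eq, mul_apply_eq_vecMul, sig_row_zero]

lemma ofReal_abs_det_mul_inv_abs_det_sig_emul {a : Fin n → ℝ} (ha : (sig n a).det ≠ 0)
    (y : Fin n → ℝ) :
    ENNReal.ofReal |(sig n a).det| * ENNReal.ofReal |(sig n (emul n a y)).det|⁻¹ =
      ENNReal.ofReal |(sig n y).det|⁻¹ := by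
  rw [← ENNReal.ofReal_mul (abs_nonneg _), sig_emul, det_mul, abs_mul, mul_inv, ← mul_assoc,
    mul_inv_cancel₀ (abs_ne_zero.mpr ha), one_mul]

end Sig

lemma LinearMap.det_vecMulLinear {R ι : Type*} [CommRing R] [Fintype ι] [DecidableEq ι]
    (M : Matrix ι ι R) : LinearMap.det M.vecMulLinear = M.det := by
  rw [← Matrix.mulVecLin_transpose, ← Matrix.toLin'_apply', LinearMap.det_toLin', det_transpose]

lemma setLIntegral_image_continuousLinearMap {E : Type*} [NormedAddCommGroup E]
    [NormedSpace ℝ E] [FiniteDimensional ℝ E] [MeasurableSpace E] [BorelSpace E] (μ : Measure E)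
    [μ.IsAddHaarMeasure] (L : E →L[ℝ] E) (hL : L.det ≠ 0) {s : Set E} (hs : MeasurableSet s)
    (g : E → ENNReal) :
    ∫⁻ x in L '' s, g x ∂μ = ∫⁻ x in s, ENNReal.ofReal |L.det| * g (L x) ∂μ := by
  have hinj : Function.Injective L :=
    ((Module.End.isUnit_iff _).mp ((LinearMap.isUnit_iff_isUnit_det _).mpr hL.isUnit)).injective
  exact lintegral_image_eq_lintegral_abs_det_fderiv_mul μ hs
    (fun x _ => L.hasFDerivAt.hasFDerivWithinAt) hinj.injOn g

theorem haar_measure_left_invariant (n : ℕ) (hn : 2 ≤ n) :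
    haveI : NeZero n := ⟨by omega⟩
    ∀ (a : Fin n → ℝ), (sig n a).det ≠ 0 →
    ∀ (E : Set (Fin n → ℝ)), MeasurableSet E →
      E ⊆ {x | (sig n x).det ≠ 0} →
      ∫⁻ x in (fun y => emul n a y) '' E, ENNReal.ofReal |(sig n x).det|⁻¹ =
        ∫⁻ x in E, ENNReal.ofReal |(sig n x).det|⁻¹ := by
  have : NeZero n := ⟨by omega⟩
  intro a ha E hE _
  set L : (Fin n → ℝ) →L[ℝ] (Fin n → ℝ) := (sig n a).vecMulLinear.toContinuousLinearMap
  have hL : (fun y => emul n a y) = L := funext (emul_eq_vecMul a)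
  have hLdet : L.det = (sig n a).det := LinearMap.det_vecMulLinear _
  rw [hL, setLIntegral_image_continuousLinearMap volume L (hLdet ▸ ha) hE, hLdet]
  refine setLIntegral_congr_fun hE fun y _ => ?_
  rw [← ofReal_abs_det_mul_inv_abs_det_sig_emul ha y, emul_eq_vecMul]
  rfl
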